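/- arXiv:2604.12937 — 2 statements merged into one kernel-verified Lean document; each statement's English description precedes it below -/
import Mathlib

section
/- Let W be a lower-bounded generalized module for the rank one Heisenberg vertex operator algebra M(1), identified with M(1) ⊗ Ω(W) where Ω(W) = {w ∈ W : α(n)w = 0 for all n > 0}. Then for every integer n ≥ 0, Ω_n(W) = span{α(−i₁)···α(−i_j)1 ⊗ w : w ∈ Ω(W), j ∈ ℕ, i₁ + ··· + i_j ≤ n}, and hence Gr_n(W) = Ω_n(W)/Ω_{n−1}(W) is spanned by the classes of α(−i₁)···α(−i_j)1 ⊗ w with i₁ + ··· + i_j = n. -/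
noncomputable section

open scoped BigOperators

/-- The generalized binomial coefficient `C(m, k)` for `m : ℤ`, as a complex number. -/
def cchoose (m : ℤ) (k : ℕ) : ℂ :=
  (∏ i ∈ Finset.range k, ((m : ℂ) - (i : ℂ))) / (k.factorial : ℂ)

/-- A grading-restricted vertex algebra structure on a complex vector space `V`,
presented via the projections `proj n` onto the weight spaces `V_(n)` and the
modes `mode u n = u_n` of the vertex operator `Y(u,x) = ∑ u_n x^{-n-1}`. -/
structure GRVertexAlgebra (V : Type) [AddCommGroup V] [Module ℂ V] : Type where
  /-- projection onto the weight-`n` subspace `V_(n)` -/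
  proj : ℤ → V →ₗ[ℂ] V
  /-- `mode u n v = u_n v` -/
  mode : V → ℤ → V → V
  /-- the vacuum vector `𝟙` -/
  one : V
  mode_add_left : ∀ (u u' : V) (n : ℤ) (v : V),
    mode (u + u') n v = mode u n v + mode u' n v
  mode_smul_left : ∀ (c : ℂ) (u : V) (n : ℤ) (v : V),
    mode (c • u) n v = c • mode u n v
  mode_add_right : ∀ (u : V) (n : ℤ) (v v' : V),
    mode u n (v + v') = mode u n v + mode u n v'
  mode_smul_right : ∀ (u : V) (n : ℤ) (c : ℂ) (v : V),
    mode u n (c • v) = c • mode u n v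
  proj_idem : ∀ (m n : ℤ) (v : V), proj m (proj n v) = if m = n then proj n v else 0
  proj_support_finite : ∀ v : V, (Function.support fun n : ℤ => proj n v).Finite
  proj_sum : ∀ v : V, (∑ᶠ n : ℤ, proj n v) = v
  /-- each weight space is finite dimensional -/
  grading_finite_dim : ∀ n : ℤ, FiniteDimensional ℂ (LinearMap.range (proj n))
  /-- the grading is bounded below -/
  grading_bounded_below : ∃ N : ℤ, ∀ n : ℤ, n < N → proj n = 0
  /-- lower truncation: `u_n v = 0` for `n` sufficiently large -/
  lower_trunc : ∀ u v : V, ∃ N : ℤ, ∀ n : ℤ, N ≤ n → mode u n v = 0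
  /-- the vacuum is homogeneous of weight `0` -/
  one_homogeneous : proj 0 one = one
  /-- identity property `Y(𝟙,x) = 1` -/
  identity_prop : ∀ (n : ℤ) (v : V), mode one n v = if n = -1 then v else 0
  /-- creation property, regular part -/
  creation : ∀ (u : V) (n : ℤ), 0 ≤ n → mode u n one = 0
  /-- creation property, constant term: `lim_{x→0} Y(u,x)𝟙 = u` -/
  creation_limit : ∀ u : V, mode u (-1) one = u
  /-- the Jacobi identity, in terms of modes -/
  jacobi : ∀ (a b c : V) (l m n : ℤ),
      (∑ᶠ i : ℕ, cchoose m i • mode (mode a (l + i) b) (m + n - i) c)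
    = (∑ᶠ i : ℕ, ((-1 : ℂ) ^ (i : ℕ) * cchoose l i) • mode a (m + l - i) (mode b (n + i) c))
      - (∑ᶠ i : ℕ, ((-1 : ℂ) ^ (l + i : ℤ) * cchoose l i) •
          mode b (n + l - i) (mode a (m + i) c))
  /-- `L(0)`-bracket formula, where `L(0) v = ∑ n • proj n v` -/
  L0_bracket : ∀ (a v : V) (n : ℤ),
      (∑ᶠ m : ℤ, (m : ℂ) • proj m (mode a n v)) - mode a n (∑ᶠ m : ℤ, (m : ℂ) • proj m v)
    = mode (∑ᶠ m : ℤ, (m : ℂ) • proj m a) n v + (-(n : ℂ) - 1) • mode a n v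
  /-- `L(-1)`-derivative formula, where `L(-1) u = u_{-2} 𝟙`:
  `Y(L(-1)u, x) = (d/dx) Y(u,x)` -/
  Lneg1_deriv : ∀ (u v : V) (n : ℤ),
      mode (mode u (-2) one) n v = (-(n : ℂ)) • mode u (n - 1) v
  /-- `L(-1)`-bracket formula: `[L(-1), Y(u,x)] = Y(L(-1)u, x)` -/
  Lneg1_bracket : ∀ (u v : V) (n : ℤ),
      mode (mode u n v) (-2) one - mode u n (mode v (-2) one)
    = mode (mode u (-2) one) n v

namespace GRVertexAlgebra

variable {V : Type} [AddCommGroup V] [Module ℂ V]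

/-- The operator `L(0)`. -/
def L0op (VA : GRVertexAlgebra V) (v : V) : V := ∑ᶠ m : ℤ, (m : ℂ) • VA.proj m v

/-- The operator `L(-1)`. -/
def Lneg1op (VA : GRVertexAlgebra V) (v : V) : V := VA.mode v (-2) VA.one

/-- `u` is homogeneous (of some weight). -/
def Homogeneous (VA : GRVertexAlgebra V) (u : V) : Prop := ∃ w : ℤ, VA.proj w u = u

lemma mode_zero_left (VA : GRVertexAlgebra V) (n : ℤ) (v : V) : VA.mode 0 n v = 0 := by
  simpa using VA.mode_smul_left 0 0 n v

lemma mode_zero_right (VA : GRVertexAlgebra V) (u : V) (n : ℤ) : VA.mode u n 0 = 0 := by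
  simpa using VA.mode_smul_right u n 0 0

/-- `Res_x x^N (1+x)^{l + L(0)-weight} Y(u, x) v`, i.e. the residue
`Res_x x^N (1+x)^l Y((1+x)^{L(0)} u, x) v`, expressed in terms of modes and the
homogeneous components of `u`. -/
def resPow (VA : GRVertexAlgebra V) (N l : ℤ) (u v : V) : V :=
  ∑ᶠ m : ℤ, ∑ᶠ i : ℕ, cchoose (l + m) i • VA.mode (VA.proj m u) (N + i) v

end GRVertexAlgebra

section UInf

variable (V : Type) [AddCommGroup V] [Module ℂ V]

/-- The space of column-finite `ℕ × ℕ` matrices with entries in `V`, as a submodule of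
the space of all doubly indexed families. -/
def UInfSub : Submodule ℂ (ℕ → ℕ → V) where
  carrier := {A | ∀ l : ℕ, (Function.support fun k => A k l).Finite}
  add_mem' := by
    intro A B hA hB l
    refine Set.Finite.subset ((hA l).union (hB l)) ?_
    intro k hk
    by_contra h
    simp only [Set.mem_union, Function.mem_support, not_or, not_not] at h
    exact hk (by simp [Pi.add_apply, h.1, h.2])
  zero_mem' := by
    intro l
    simp [Function.support]
  smul_mem' := by
    intro c A hA l
    refine Set.Finite.subset (hA l) ?_
    intro k hk
    by_contra h
    simp only [Function.mem_support, not_not] at h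
    exact hk (by simp [Pi.smul_apply, h])

/-- `U^∞(V)`: column-finite `ℕ × ℕ` matrices with entries in `V`. -/
def UInf : Type := ↥(UInfSub V)

instance : AddCommGroup (UInf V) := by unfold UInf; infer_instance
instance : Module ℂ (UInf V) := by unfold UInf; infer_instance

end UInf

namespace GRVertexAlgebra

variable {V : Type} [AddCommGroup V] [Module ℂ V]

/-- `[v]_{kl} = v ⊗ E_{kl}`, the matrix with entry `v` in position `(k,l)` and `0` elsewhere. -/
def Usingle (v : V) (k l : ℕ) : UInf V :=
  ⟨fun k' l' => if k' = k ∧ l' = l then v else 0, by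
    intro l'
    refine Set.Finite.subset (Set.finite_singleton k) ?_
    intro k' hk'
    simp only [Function.mem_support] at hk'
    by_contra h
    simp only [Set.mem_singleton_iff] at h
    exact hk' (by simp [h])⟩

/-- The `(k,l)` entry of the product `[u]_{kn} ⋄ [v]_{nl}`:
`∑_{m=0}^{n} C(-k+n-l-1, m) Res_x x^{-k+n-l-m-1} (1+x)^l Y((1+x)^{L(0)} u, x) v`. -/
def diamondEntry (VA : GRVertexAlgebra V) (u v : V) (k n l : ℕ) : V :=
  ∑ m ∈ Finset.range (n + 1),
    cchoose (-(k : ℤ) + n - l - 1) m • VA.resPow (-(k : ℤ) + n - l - m - 1) l u v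

lemma resPow_zero_left (VA : GRVertexAlgebra V) (N l : ℤ) (v : V) :
    VA.resPow N l 0 v = 0 := by
  unfold GRVertexAlgebra.resPow
  have h : ∀ m : ℤ, (∑ᶠ i : ℕ, cchoose (l + m) i • VA.mode (VA.proj m (0 : V)) (N + i) v) = 0 := by
    intro m
    have : ∀ i : ℕ, cchoose (l + m) i • VA.mode (VA.proj m (0 : V)) (N + i) v = 0 := by
      intro i
      rw [map_zero, VA.mode_zero_left]
      simp
    simp only [this]
    exact finsum_zero
  simp only [h]
  exact finsum_zero

lemma resPow_zero_right (VA : GRVertexAlgebra V) (N l : ℤ) (u : V) :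
    VA.resPow N l u 0 = 0 := by
  unfold GRVertexAlgebra.resPow
  have h : ∀ m : ℤ, (∑ᶠ i : ℕ, cchoose (l + m) i • VA.mode (VA.proj m u) (N + i) (0 : V)) = 0 := by
    intro m
    have : ∀ i : ℕ, cchoose (l + m) i • VA.mode (VA.proj m u) (N + i) (0 : V) = 0 := by
      intro i
      rw [VA.mode_zero_right]
      simp
    simp only [this]
    exact finsum_zero
  simp only [h]
  exact finsum_zero

lemma diamondEntry_zero_left (VA : GRVertexAlgebra V) (v : V) (k n l : ℕ) :
    VA.diamondEntry 0 v k n l = 0 := by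
  unfold GRVertexAlgebra.diamondEntry
  simp [VA.resPow_zero_left]

lemma diamondEntry_zero_right (VA : GRVertexAlgebra V) (u : V) (k n l : ℕ) :
    VA.diamondEntry u 0 k n l = 0 := by
  unfold GRVertexAlgebra.diamondEntry
  simp [VA.resPow_zero_right]

/-- The product `⋄` on `U^∞(V)`. -/
def udiamond (VA : GRVertexAlgebra V) (A B : UInf V) : UInf V :=
  ⟨fun k l => ∑ᶠ n : ℕ, VA.diamondEntry (A.1 k n) (B.1 n l) k n l, by
    intro l
    refine Set.Finite.subset
      (Set.Finite.biUnion (B.2 l) (fun n _ => A.2 n)) ?_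
    intro k hk
    simp only [Function.mem_support] at hk
    by_contra h
    apply hk
    have hterm : ∀ n : ℕ, VA.diamondEntry (A.1 k n) (B.1 n l) k n l = 0 := by
      intro n
      by_cases hB : B.1 n l = 0
      · rw [hB]; exact VA.diamondEntry_zero_right _ _ _ _
      · have hA : A.1 k n = 0 := by
          by_contra hA
          exact h (Set.mem_biUnion (by exact hB) (by exact hA))
        rw [hA]; exact VA.diamondEntry_zero_left _ _ _ _
    simp only [hterm]
    exact finsum_zero⟩

end GRVertexAlgebra
/-- A lower-bounded generalized module for a grading-restricted vertex algebra,
presented via the mode action `wmode`, the projections `wproj μ` onto the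
(generalized-eigenvalue) weight spaces `W_(μ)`, and the operators `L_W(0)`, `L_W(-1)`. -/
structure LBGModule {V : Type} [AddCommGroup V] [Module ℂ V]
    (VA : GRVertexAlgebra V) (W : Type) [AddCommGroup W] [Module ℂ W] : Type where
  /-- `wmode u n w = u_n w`, the modes of `Y_W(u,x) = ∑ u_n x^{-n-1}` -/
  wmode : V → ℤ → W → W
  /-- projection onto the weight-`μ` subspace `W_(μ)` -/
  wproj : ℂ → W →ₗ[ℂ] W
  /-- the operator `L_W(0)` -/
  LW0 : W →ₗ[ℂ] W
  /-- the operator `L_W(-1)` -/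
  LW1 : W →ₗ[ℂ] W
  wmode_add_left : ∀ (u u' : V) (n : ℤ) (w : W),
    wmode (u + u') n w = wmode u n w + wmode u' n w
  wmode_smul_left : ∀ (c : ℂ) (u : V) (n : ℤ) (w : W),
    wmode (c • u) n w = c • wmode u n w
  wmode_add_right : ∀ (u : V) (n : ℤ) (w w' : W),
    wmode u n (w + w') = wmode u n w + wmode u n w'
  wmode_smul_right : ∀ (u : V) (n : ℤ) (c : ℂ) (w : W),
    wmode u n (c • w) = c • wmode u n w
  wproj_idem : ∀ (μ ν : ℂ) (w : W), wproj μ (wproj ν w) = if μ = ν then wproj ν w else 0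
  wproj_support_finite : ∀ w : W, (Function.support fun μ : ℂ => wproj μ w).Finite
  wproj_sum : ∀ w : W, (∑ᶠ μ : ℂ, wproj μ w) = w
  /-- the grading is bounded below in real part -/
  grading_bounded_below : ∃ B : ℝ, ∀ μ : ℂ, μ.re < B → wproj μ = 0
  /-- lower truncation -/
  lower_trunc : ∀ (u : V) (w : W), ∃ N : ℤ, ∀ n : ℤ, N ≤ n → wmode u n w = 0
  /-- identity property `Y_W(𝟙,x) = 1` -/
  identity_prop : ∀ (n : ℤ) (w : W), wmode VA.one n w = if n = -1 then w else 0
  /-- the Jacobi identity for the module -/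
  jacobi : ∀ (a b : V) (w : W) (l m n : ℤ),
      (∑ᶠ i : ℕ, cchoose m i • wmode (VA.mode a (l + i) b) (m + n - i) w)
    = (∑ᶠ i : ℕ, ((-1 : ℂ) ^ (i : ℕ) * cchoose l i) • wmode a (m + l - i) (wmode b (n + i) w))
      - (∑ᶠ i : ℕ, ((-1 : ℂ) ^ (l + i : ℤ) * cchoose l i) •
          wmode b (n + l - i) (wmode a (m + i) w))
  /-- `W_(μ)` is the generalized eigenspace of `L_W(0)` with eigenvalue `μ` -/
  gen_eigenspace : ∀ (μ : ℂ) (w : W),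
    ∃ k : ℕ, (((LW0 - μ • LinearMap.id : Module.End ℂ W) ^ k) : W →ₗ[ℂ] W) (wproj μ w) = 0
  gen_eigenspace_mem : ∀ (μ : ℂ) (w : W),
    (∃ k : ℕ, (((LW0 - μ • LinearMap.id : Module.End ℂ W) ^ k) : W →ₗ[ℂ] W) w = 0) → wproj μ w = w
  /-- `L_W(0)`-bracket formula -/
  LW0_bracket : ∀ (a : V) (w : W) (n : ℤ),
      LW0 (wmode a n w) - wmode a n (LW0 w)
    = wmode (∑ᶠ m : ℤ, (m : ℂ) • VA.proj m a) n w + (-(n : ℂ) - 1) • wmode a n w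
  /-- `L_W(-1)`-derivative formula: `Y_W(L(-1)u, x) = (d/dx) Y_W(u,x)` -/
  LW1_deriv : ∀ (u : V) (w : W) (n : ℤ),
      wmode (VA.mode u (-2) VA.one) n w = (-(n : ℂ)) • wmode u (n - 1) w
  /-- `L_W(-1)`-bracket formula -/
  LW1_bracket : ∀ (u : V) (w : W) (n : ℤ),
      LW1 (wmode u n w) - wmode u n (LW1 w) = wmode (VA.mode u (-2) VA.one) n w

namespace LBGModule

variable {V : Type} [AddCommGroup V] [Module ℂ V] {VA : GRVertexAlgebra V}
variable {W : Type} [AddCommGroup W] [Module ℂ W]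

lemma wmode_zero_left (M : LBGModule VA W) (n : ℤ) (w : W) : M.wmode 0 n w = 0 := by
  simpa using M.wmode_smul_left 0 0 n w

lemma wmode_zero_right (M : LBGModule VA W) (u : V) (n : ℤ) : M.wmode u n 0 = 0 := by
  simpa using M.wmode_smul_right u n 0 0

/-- `Ω_n(W) = {w ∈ W : v_k w = 0 for homogeneous v with wt v - k - 1 < -n}`
(for `n < 0` this is automatically `{0}`, matching `Ω_{-1}(W) = 0`). -/
def OmegaSet (M : LBGModule VA W) (n : ℤ) : Set W :=
  {w : W | ∀ (m k : ℤ) (v : V), m - k - 1 < -n → M.wmode (VA.proj m v) k w = 0}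

/-- `ϑ_{Gr(W)}([v]_{kl})` applied to a representative `w`:
`Res_x x^{l-k-1} Y_W(x^{L(0)} v, x) w`. -/
def wAct (M : LBGModule VA W) (v : V) (k l : ℕ) (w : W) : W :=
  ∑ᶠ m : ℤ, M.wmode (VA.proj m v) ((l : ℤ) - (k : ℤ) - 1 + m) w

end LBGModule

namespace GRVertexAlgebra

variable {V : Type} [AddCommGroup V] [Module ℂ V]

/-- Membership in `Q^∞(V)`: `A` acts as zero on `Gr(W)` for every lower-bounded
generalized `V`-module `W`.  Here the action of `A` on `[w]_n ∈ Gr_n(W)` has component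
`[ϑ([A_{kn}]_{kn}) w]_k` in `Gr_k(W)`, which vanishes in `Gr_k(W) = Ω_k(W)/Ω_{k-1}(W)`
exactly when the representative lies in `Ω_{k-1}(W)`. -/
def memQ (VA : GRVertexAlgebra V) (A : UInf V) : Prop :=
  ∀ (W : Type) (_ : AddCommGroup W) (_ : Module ℂ W) (M : LBGModule VA W)
    (n k : ℕ) (w : W), w ∈ M.OmegaSet n →
      M.wAct (A.1 k n) k n w ∈ M.OmegaSet ((k : ℤ) - 1)

/-- The generators of `O^∞_∘(V)` living in position `(k,l)`:
`Res_x x^{-k-l-p-2} (1+x)^l Y((1+x)^{L(0)} u, x) v`. -/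
def circExpr (VA : GRVertexAlgebra V) (u v : V) (k l p : ℕ) : V :=
  VA.resPow (-(k : ℤ) - l - p - 2) l u v

/-- Membership in `O^∞_∘(V)`: each entry of `A` is a (finite) linear combination of the
generators `Res_x x^{-k-l-p-2} (1+x)^l [Y((1+x)^{L(0)} u, x) v]_{kl}`; since each generator
is concentrated in a single position `(k,l)`, an infinite linear combination in which each
pair `(k,l)` appears only finitely many times is exactly a column-finite matrix each of whose
entries lies in the corresponding span. -/
def memOcirc (VA : GRVertexAlgebra V) (A : UInf V) : Prop :=
  ∀ k l : ℕ, A.1 k l ∈ Submodule.span ℂ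
    {x : V | ∃ (u v : V) (p : ℕ), x = VA.circExpr u v k l p}

/-- The element `(L(-1) + L(0) + l - k) v`. -/
def LLExpr (VA : GRVertexAlgebra V) (k l : ℕ) (v : V) : V :=
  VA.Lneg1op v + VA.L0op v + (((l : ℂ) - (k : ℂ)) • v)

/-- Membership in `O^∞(V)`. -/
def memO (VA : GRVertexAlgebra V) (A : UInf V) : Prop :=
  ∀ k l : ℕ, A.1 k l ∈ Submodule.span ℂ
    ({x : V | ∃ (u v : V) (p : ℕ), x = VA.circExpr u v k l p}
      ∪ {x : V | ∃ v : V, x = VA.LLExpr k l v})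

end GRVertexAlgebra
namespace GRVertexAlgebra

variable {V : Type} [AddCommGroup V] [Module ℂ V]

/-- Huang's Jacobi-identity element of `U^∞(V)` attached to `u, v ∈ V` with `v`
homogeneous of weight `wtv`, and integers `k ∈ ℕ`, `l, p, n ∈ ℤ` with `l + p ∈ ℕ`:
`∑_{j, n+p-j ≥ 0} (-1)^j C(p,j) [v]_{k,n+p-j} ⋄ [u]_{n+p-j,l+p}`
`- ∑_{j, l-n+k+p-j ≥ 0} (-1)^{p-j} C(p,j) [u]_{k,l-n+k+p-j} ⋄ [v]_{l-n+k+p-j,l+p}`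
`- ∑_{j ∈ ℕ} C(wt v + n - k - 1, j) [v_{p+j} u]_{k,l+p}`. -/
def jElt (VA : GRVertexAlgebra V) (u v : V) (wtv : ℤ) (k : ℕ) (l p n : ℤ) : UInf V :=
  (∑ᶠ j : ℕ, if (j : ℤ) ≤ n + p then
      ((-1 : ℂ) ^ (j : ℕ) * cchoose p j) •
        VA.udiamond (Usingle v k (n + p - j).toNat)
          (Usingle u (n + p - j).toNat (l + p).toNat)
    else 0)
  - (∑ᶠ j : ℕ, if (j : ℤ) ≤ l - n + (k : ℤ) + p then
      ((-1 : ℂ) ^ ((p : ℤ) - (j : ℤ)) * cchoose p j) •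
        VA.udiamond (Usingle u k (l - n + (k : ℤ) + p - j).toNat)
          (Usingle v (l - n + (k : ℤ) + p - j).toNat (l + p).toNat)
    else 0)
  - Usingle (∑ᶠ j : ℕ, cchoose (wtv + n - (k : ℤ) - 1) j • VA.mode v (p + j) u)
      k (l + p).toNat

/-- The `(k, l+p)` entry of the Jacobi-identity element `jElt`, written out in terms of
residues as in the paper. -/
def jEntry (VA : GRVertexAlgebra V) (u v : V) (wtv : ℤ) (k : ℕ) (l p n : ℤ) : V :=
  (∑ᶠ j : ℕ, if (j : ℤ) ≤ n + p then
      ((-1 : ℂ) ^ (j : ℕ) * cchoose p j) •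
        VA.diamondEntry v u k (n + p - j).toNat (l + p).toNat
    else 0)
  - (∑ᶠ j : ℕ, if (j : ℤ) ≤ l - n + (k : ℤ) + p then
      ((-1 : ℂ) ^ ((p : ℤ) - (j : ℤ)) * cchoose p j) •
        VA.diamondEntry u v k (l - n + (k : ℤ) + p - j).toNat (l + p).toNat
    else 0)
  - (∑ᶠ j : ℕ, cchoose (wtv + n - (k : ℤ) - 1) j • VA.mode v (p + j) u)

/-- The set of generating elements of `J^∞(V)`. -/
def JSet (VA : GRVertexAlgebra V) : Set (UInf V) :=
  {A : UInf V | ∃ (u v : V) (wtv : ℤ) (k : ℕ) (l p n : ℤ),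
    VA.proj wtv v = v ∧ 0 ≤ l + p ∧ A = VA.jElt u v wtv k l p n}

/-- The set `O^∞(V)` of Huang, as a subset of `U^∞(V)`. -/
def OSet (VA : GRVertexAlgebra V) : Set (UInf V) := {A : UInf V | VA.memO A}

end GRVertexAlgebra

/-- A vertex operator algebra: a grading-restricted vertex algebra together with a
conformal vector `ω` whose modes `L(n) = ω_{n+1}` give a representation of the Virasoro
algebra, recover the grading operator `L(0)`, and satisfy the `L(-1)`-property. -/
structure VertexOperatorAlgebra (V : Type) [AddCommGroup V] [Module ℂ V]
    extends GRVertexAlgebra V : Type where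
  /-- the conformal vector -/
  omega : V
  /-- the central charge -/
  centralCharge : ℂ
  /-- the Virasoro relations for `L(n) = ω_{n+1}` -/
  virasoro : ∀ (m n : ℤ) (v : V),
      mode omega (m + 1) (mode omega (n + 1) v) - mode omega (n + 1) (mode omega (m + 1) v)
    = ((m : ℂ) - (n : ℂ)) • mode omega (m + n + 1) v
      + (if m + n = 0 then (((m ^ 3 - m : ℤ) : ℂ) / 12) * centralCharge else 0) • v
  /-- `L(0) = ω_1` is the grading operator -/
  omega_L0 : ∀ v : V, mode omega 1 v = ∑ᶠ m : ℤ, (m : ℂ) • proj m v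
  /-- `L(-1) = ω_0` -/
  omega_Lneg1 : ∀ v : V, mode omega 0 v = mode v (-2) one

namespace GRVertexAlgebra

variable {V : Type} [AddCommGroup V] [Module ℂ V]

/-- The circle product `u ∘_n v = Res_x (1+x)^{wt u + n} Y(u,x) v / x^{2n+2}`
(for `u` homogeneous; `resPow` inserts the weight of each homogeneous component). -/
def circN (VA : GRVertexAlgebra V) (n : ℕ) (u v : V) : V :=
  VA.resPow (-(2 * (n : ℤ)) - 2) n u v

/-- The subspace `O_n(V)`, spanned by the `u ∘_n v` for homogeneous `u` and all `v`, and
by the `(L(-1) + L(0)) v`. -/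
def ZhuO (VA : GRVertexAlgebra V) (n : ℕ) : Submodule ℂ V :=
  Submodule.span ℂ
    ({x : V | ∃ u v : V, VA.Homogeneous u ∧ x = VA.circN n u v}
      ∪ {x : V | ∃ v : V, x = VA.Lneg1op v + VA.L0op v})

/-- The product `u *_n v` of Dong–Li–Mason (for `u` homogeneous, extended linearly):
`∑_{m=0}^{n} (-1)^m C(m+n, n) Res_x (1+x)^{wt u + n} Y(u,x) v / x^{n+m+1}`. -/
def starN (VA : GRVertexAlgebra V) (n : ℕ) (u v : V) : V :=
  ∑ m ∈ Finset.range (n + 1),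
    ((-1 : ℂ) ^ (m : ℕ) * ((m + n).choose n : ℂ)) •
      VA.resPow (-(n : ℤ) - m - 1) n u v

end GRVertexAlgebra

/-- The monomial `α(-i_1) ⋯ α(-i_j) 𝟙` of the rank one Heisenberg vertex operator algebra,
indexed by the multiset `{i_1, …, i_j}` of positive integers; here `a = α(-1)𝟙` so that
`α(m) = a_m`. -/
def heisMono {V : Type} [AddCommGroup V] [Module ℂ V]
    (VA : GRVertexAlgebra V) (a : V) (μ : Multiset ℕ+) : V :=
  (μ.sort (· ≤ ·)).foldr (fun i v => VA.mode a (-(i : ℤ)) v) VA.one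

/-- The rank one Heisenberg vertex operator algebra `M(1)`: a vertex operator algebra
with a weight-one element `a = α(-1)𝟙` whose modes `α(m) = a_m` satisfy the rank one
Heisenberg relations (with the central element acting as `1`), such that the monomials
`α(-i_1) ⋯ α(-i_j) 𝟙` form a basis, and with conformal vector `ω = (1/2) α(-1)² 𝟙`
of central charge `1`. -/
structure HeisenbergVOA (V : Type) [AddCommGroup V] [Module ℂ V]
    extends VertexOperatorAlgebra V : Type where
  /-- the element `a = α(-1)𝟙` -/
  a : V
  /-- `α(-1)𝟙` is homogeneous of weight one -/
  a_wt : proj 1 a = a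
  /-- the Heisenberg commutation relations `[α(m), α(n)] = m δ_{m+n,0}` (`c` acts as `1`) -/
  heis_comm : ∀ (m n : ℤ) (v : V),
      mode a m (mode a n v) - mode a n (mode a m v)
    = if m + n = 0 then (m : ℂ) • v else 0
  /-- `M(1) ≃ S(ĥ⁻)` linearly: the monomials `α(-i_1)⋯α(-i_j)𝟙` form a basis -/
  basis : Module.Basis (Multiset ℕ+) ℂ V
  basis_eq : ∀ μ : Multiset ℕ+, basis μ = heisMono toGRVertexAlgebra a μ
  omega_eq : omega = (1 / 2 : ℂ) • mode a (-1) a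
  centralCharge_eq : centralCharge = 1

namespace HeisenbergVOA

variable {V : Type} [AddCommGroup V] [Module ℂ V]

/-- The element
`D_n = [α(-1)𝟙]_{nn} ⋄ [α(-1)𝟙]_{nn} - [α(-1)²𝟙]_{nn} + 2n [𝟙]_{nn}` of `U^∞(M(1))`. -/
def Delt (H : HeisenbergVOA V) (n : ℕ) : UInf V :=
  H.udiamond (GRVertexAlgebra.Usingle H.a n n) (GRVertexAlgebra.Usingle H.a n n)
    - GRVertexAlgebra.Usingle (H.mode H.a (-1) H.a) n n
    + (2 * (n : ℂ)) • GRVertexAlgebra.Usingle H.one n n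

end HeisenbergVOA

namespace LBGModule

variable {V : Type} [AddCommGroup V] [Module ℂ V]
variable {W : Type} [AddCommGroup W] [Module ℂ W]

/-- `Ω(W) = {w ∈ W : α(n) w = 0 for all n > 0}` for a module `W` over the rank one
Heisenberg vertex operator algebra. -/
def smallOmega (H : HeisenbergVOA V) (M : LBGModule H.toGRVertexAlgebra W) :
    Submodule ℂ W where
  carrier := {w : W | ∀ n : ℤ, 0 < n → M.wmode H.a n w = 0}
  add_mem' := by
    intro w w' hw hw' n hn
    rw [M.wmode_add_right, hw n hn, hw' n hn, add_zero]
  zero_mem' := fun n _ => M.wmode_zero_right H.a n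
  smul_mem' := by
    intro c w hw n hn
    rw [M.wmode_smul_right, hw n hn, smul_zero]

end LBGModule
/-! ### Auxiliary development for the Heisenberg `Ω_n` theorem -/

section HeisenbergAux

lemma cchoose_zero_right' (m : ℤ) : cchoose m 0 = 1 := by
  simp [cchoose]

lemma cchoose_zero_left' {t : ℕ} (ht : t ≠ 0) : cchoose 0 t = 0 := by
  unfold cchoose
  rw [Finset.prod_eq_zero (i := 0) (Finset.mem_range.mpr (Nat.pos_of_ne_zero ht)) (by simp),
    zero_div]

lemma cchoose_one_right' (m : ℤ) : cchoose m 1 = m := by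
  simp [cchoose]

namespace GRVertexAlgebra

variable {V : Type} [AddCommGroup V] [Module ℂ V] (VA : GRVertexAlgebra V)

lemma L0_of_homog {u : V} {p : ℤ} (hu : VA.proj p u = u) :
    (∑ᶠ m : ℤ, (m : ℂ) • VA.proj m u) = (p : ℂ) • u := by
  rw [finsum_eq_single _ p]
  · rw [hu]
  · intro m hm
    conv_lhs => rw [← hu]
    rw [VA.proj_idem, if_neg hm, smul_zero]

lemma proj_finsum_smul (u : V) (m : ℤ) :
    VA.proj m (∑ᶠ m' : ℤ, (m' : ℂ) • VA.proj m' u) = (m : ℂ) • VA.proj m u := by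
  have hfin : (Function.support fun m' : ℤ => (m' : ℂ) • VA.proj m' u).Finite := by
    apply (VA.proj_support_finite u).subset
    intro x hx
    simp only [Function.mem_support] at hx ⊢
    intro h0
    exact hx (by rw [h0, smul_zero])
  rw [← LinearMap.toAddMonoidHom_coe, AddMonoidHom.map_finsum _ hfin]
  simp only [LinearMap.toAddMonoidHom_coe, map_smul]
  rw [finsum_eq_single _ m]
  · rw [VA.proj_idem, if_pos rfl]
  · intro m' hm'
    rw [VA.proj_idem, if_neg (Ne.symm hm'), smul_zero]

lemma homog_of_L0 {u : V} {p : ℤ}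
    (h : (∑ᶠ m : ℤ, (m : ℂ) • VA.proj m u) = (p : ℂ) • u) : VA.proj p u = u := by
  have hz : ∀ m : ℤ, m ≠ p → VA.proj m u = 0 := by
    intro m hm
    have h1 : (m : ℂ) • VA.proj m u = (p : ℂ) • VA.proj m u := by
      rw [← VA.proj_finsum_smul u m, h, map_smul]
    have h2 : ((m : ℂ) - (p : ℂ)) • VA.proj m u = 0 := by
      rw [sub_smul, h1, sub_self]
    rcases smul_eq_zero.mp h2 with hc | hv
    · exact absurd (by exact_mod_cast sub_eq_zero.mp hc) hm
    · exact hv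
  conv_rhs => rw [← VA.proj_sum u]
  rw [finsum_eq_single _ p hz]

lemma mode_homog {u v : V} {p q : ℤ} (hu : VA.proj p u = u) (hv : VA.proj q v = v) (t : ℤ) :
    VA.proj (p + q - t - 1) (VA.mode u t v) = VA.mode u t v := by
  apply VA.homog_of_L0
  have hb := VA.L0_bracket u v t
  rw [VA.L0_of_homog hu, VA.L0_of_homog hv, VA.mode_smul_left, VA.mode_smul_right,
    sub_eq_iff_eq_add] at hb
  rw [hb, ← add_smul, ← add_smul]
  congr 1
  push_cast
  ring

end GRVertexAlgebra

section ModAux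

variable {V W : Type} [AddCommGroup V] [Module ℂ V] [AddCommGroup W] [Module ℂ W]
variable (H : HeisenbergVOA V) (M : LBGModule H.toGRVertexAlgebra W)

/-- The mode commutator formula, obtained from the Jacobi identity with `l = 0`. -/
lemma wcomm (u v : V) (w : W) (Mi N : ℤ) :
    M.wmode u Mi (M.wmode v N w) - M.wmode v N (M.wmode u Mi w)
      = ∑ᶠ t : ℕ, cchoose Mi t • M.wmode (H.mode u (t : ℤ) v) (Mi + N - t) w := by
  have hj := M.jacobi u v w 0 Mi N
  have h1 : ∀ t : ℕ, t ≠ 0 →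
      ((-1 : ℂ) ^ (t : ℕ) * cchoose 0 t) • M.wmode u (Mi + 0 - t) (M.wmode v (N + t) w) = 0 := by
    intro t ht
    rw [cchoose_zero_left' ht, mul_zero, zero_smul]
  have h2 : ∀ t : ℕ, t ≠ 0 →
      ((-1 : ℂ) ^ ((0 : ℤ) + (t : ℤ)) * cchoose 0 t) •
        M.wmode v (N + 0 - t) (M.wmode u (Mi + t) w) = 0 := by
    intro t ht
    rw [cchoose_zero_left' ht, mul_zero, zero_smul]
  rw [finsum_eq_single _ 0 h1, finsum_eq_single _ 0 h2] at hj
  simp only [Nat.cast_zero, pow_zero, cchoose_zero_right', mul_one, one_mul, one_smul,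
    add_zero, sub_zero, zpow_zero, zero_add] at hj
  exact hj.symm

/-- The iterate (associativity-type) formula, obtained from the Jacobi identity with `m = 0`. -/
lemma witer (x u : V) (w : W) (l N : ℤ) :
    M.wmode (H.mode x l u) N w
      = (∑ᶠ t : ℕ, ((-1 : ℂ) ^ (t : ℕ) * cchoose l t) •
            M.wmode x (l - t) (M.wmode u (N + t) w))
        - ∑ᶠ t : ℕ, ((-1 : ℂ) ^ (l + t : ℤ) * cchoose l t) •
            M.wmode u (N + l - t) (M.wmode x (t : ℤ) w) := by
  have hj := M.jacobi x u w l 0 N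
  have h0 : ∀ t : ℕ, t ≠ 0 →
      cchoose 0 t • M.wmode (H.mode x (l + t) u) (0 + N - t) w = 0 := by
    intro t ht
    rw [cchoose_zero_left' ht, zero_smul]
  rw [finsum_eq_single _ 0 h0] at hj
  simp only [Nat.cast_zero, add_zero, zero_add, sub_zero, cchoose_zero_right', one_smul] at hj
  exact hj

lemma a_mode_a (t : ℕ) : H.mode H.a (t : ℤ) H.a = if t = 1 then H.one else 0 := by
  have h2 := H.heis_comm (t : ℤ) (-1) H.one
  rw [H.creation_limit H.a, H.creation H.a (t : ℤ) (Int.natCast_nonneg t),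
    GRVertexAlgebra.mode_zero_right, sub_zero] at h2
  rw [h2]
  by_cases ht : t = 1
  · subst ht
    norm_num
  · rw [if_neg (by omega : ¬((t : ℤ) + -1 = 0)), if_neg ht]

/-- The Heisenberg commutation relations for the module `W`. -/
lemma wheis (Mi N : ℤ) (w : W) :
    M.wmode H.a Mi (M.wmode H.a N w) - M.wmode H.a N (M.wmode H.a Mi w)
      = if Mi + N = 0 then (Mi : ℂ) • w else 0 := by
  have hc := wcomm H M H.a H.a w Mi N
  have h1 : ∀ t : ℕ, t ≠ 1 →
      cchoose Mi t • M.wmode (H.mode H.a (t : ℤ) H.a) (Mi + N - t) w = 0 := by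
    intro t ht
    rw [a_mode_a H t, if_neg ht, M.wmode_zero_left, smul_zero]
  rw [finsum_eq_single _ 1 h1, a_mode_a H 1, if_pos rfl, cchoose_one_right',
    M.identity_prop] at hc
  rw [hc]
  by_cases h0 : Mi + N = 0
  · rw [if_pos h0, if_pos (show Mi + N - ((1 : ℕ) : ℤ) = -1 by omega)]
  · rw [if_neg h0, if_neg (show ¬(Mi + N - ((1 : ℕ) : ℤ) = -1) by omega), smul_zero]

lemma a0_mem (w₀ : W) (hw : w₀ ∈ LBGModule.smallOmega H M) :
    M.wmode H.a 0 w₀ ∈ LBGModule.smallOmega H M := by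
  intro s hs
  have h := wheis H M s 0 w₀
  rw [hw s hs, M.wmode_zero_right, sub_zero, if_neg (by omega : ¬(s + 0 = 0))] at h
  exact h

/-- `Ω_n(W)` as a submodule. -/
def OmegaSub (n : ℤ) : Submodule ℂ W where
  carrier := M.OmegaSet n
  add_mem' := by
    intro x y hx hy m k v h
    rw [M.wmode_add_right, hx m k v h, hy m k v h, add_zero]
  zero_mem' := fun m k v _ => M.wmode_zero_right _ _
  smul_mem' := by
    intro c x hx m k v h
    rw [M.wmode_smul_right, hx m k v h, smul_zero]

/-- Monomial in `M(1)` indexed by a list. -/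
def listMono (L : List ℕ+) : V :=
  L.foldr (fun i v => H.mode H.a (-(i : ℤ)) v) H.one

lemma listMono_homog (L : List ℕ+) :
    H.proj ((L.map fun i : ℕ+ => (i : ℕ)).sum : ℤ) (listMono H L) = listMono H L := by
  induction L with
  | nil => simpa [listMono] using H.one_homogeneous
  | cons i L ih =>
      have h := GRVertexAlgebra.mode_homog H.toGRVertexAlgebra H.a_wt ih (-(i : ℤ))
      have heq : listMono H (i :: L) = H.mode H.a (-(i : ℤ)) (listMono H L) := rfl
      have hidx : ((((i :: L).map fun j : ℕ+ => (j : ℕ)).sum : ℕ) : ℤ)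
          = 1 + (((L.map fun j : ℕ+ => (j : ℕ)).sum : ℕ) : ℤ) - -(i : ℤ) - 1 := by
        simp only [List.map_cons, List.sum_cons]
        push_cast
        ring
      rw [heq, hidx]
      exact h

lemma listMono_mode_omega (L : List ℕ+) :
    ∀ w₀ : W, w₀ ∈ LBGModule.smallOmega H M → ∀ k : ℤ,
      (((L.map fun i : ℕ+ => (i : ℕ)).sum : ℤ) - k - 1 < 0) →
      M.wmode (listMono H L) k w₀ = 0 := by
  induction L with
  | nil =>
      intro w₀ _ k hk
      simp only [List.map_nil, List.sum_nil, Nat.cast_zero] at hk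
      rw [show listMono H ([] : List ℕ+) = H.one from rfl, M.identity_prop,
        if_neg (by omega : ¬(k = -1))]
  | cons i L ih =>
      intro w₀ hw k hk
      simp only [List.map_cons, List.sum_cons, Nat.cast_add] at hk
      rw [show listMono H (i :: L) = H.mode H.a (-(i : ℤ)) (listMono H L) from rfl]
      rw [witer]
      have hipos : (1 : ℤ) ≤ ((i : ℕ) : ℤ) := by exact_mod_cast i.one_le
      have h1 : ∀ t : ℕ, ((-1 : ℂ) ^ (t : ℕ) * cchoose (-(i : ℤ)) t) •
          M.wmode H.a (-(i : ℤ) - t) (M.wmode (listMono H L) (k + t) w₀) = 0 := by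
        intro t
        rw [ih w₀ hw (k + t) (by omega), M.wmode_zero_right, smul_zero]
      have h2 : ∀ t : ℕ, ((-1 : ℂ) ^ (-(i : ℤ) + t : ℤ) * cchoose (-(i : ℤ)) t) •
          M.wmode (listMono H L) (k + -(i : ℤ) - t) (M.wmode H.a (t : ℤ) w₀) = 0 := by
        intro t
        rcases Nat.eq_zero_or_pos t with h0 | h0
        · subst h0
          rw [Nat.cast_zero, ih (M.wmode H.a 0 w₀) (a0_mem H M w₀ hw) (k + -(i : ℤ) - 0)
            (by omega), smul_zero]
        · rw [hw (t : ℤ) (by exact_mod_cast h0), M.wmode_zero_right, smul_zero]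
      rw [finsum_eq_zero_of_forall_eq_zero h1, finsum_eq_zero_of_forall_eq_zero h2, sub_zero]

lemma heisMono_eq_listMono (μ : Multiset ℕ+) :
    heisMono H.toGRVertexAlgebra H.a μ = listMono H (μ.sort (· ≤ ·)) := rfl

/-- The linear map `v ↦ v_k w`. -/
def wmodeFL (k : ℤ) (w : W) : V →ₗ[ℂ] W where
  toFun v := M.wmode v k w
  map_add' u u' := M.wmode_add_left u u' k w
  map_smul' c u := M.wmode_smul_left c u k w

/-- Homogeneous elements of `M(1)` of weight `m` annihilate `Ω(W)` through modes with
`m - k - 1 < 0`. -/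
lemma homog_mode_omega (v : V) (m : ℤ) (hv : H.proj m v = v) (w₀ : W)
    (hw : w₀ ∈ LBGModule.smallOmega H M) (k : ℤ) (hk : m - k - 1 < 0) :
    M.wmode v k w₀ = 0 := by
  have hFv : M.wmode v k w₀ = (wmodeFL H M k w₀).comp (H.proj m) v := by
    show M.wmode v k w₀ = M.wmode (H.proj m v) k w₀
    rw [hv]
  rw [hFv, ← H.basis.linearCombination_repr v, Finsupp.linearCombination_apply, map_finsuppSum]
  refine Finset.sum_eq_zero fun μ _ => ?_
  show M.wmode (H.proj m (H.basis.repr v μ • H.basis μ)) k w₀ = 0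
  rw [map_smul, M.wmode_smul_left]
  rw [H.basis_eq μ, heisMono_eq_listMono]
  set L := μ.sort (· ≤ ·) with hL
  have hp : H.proj m (listMono H L) =
      if m = ((L.map fun i : ℕ+ => (i : ℕ)).sum : ℤ) then listMono H L else 0 := by
    conv_lhs => rw [← listMono_homog H L]
    rw [H.proj_idem, listMono_homog]
  rw [hp]
  by_cases hm : m = ((L.map fun i : ℕ+ => (i : ℕ)).sum : ℤ)
  · rw [if_pos hm, listMono_mode_omega H M L w₀ hw k (by omega), smul_zero]
  · rw [if_neg hm, M.wmode_zero_left, smul_zero]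

/-- The statement and proof of the `crux` lemma: `α(i) v_k w = 0` for `w ∈ Ω_{N₀}`,
`v` homogeneous of weight `p`, whenever `N₀ + (p - k - 1) < i`. -/
lemma crux : ∀ (E : ℕ) (N₀ p k i : ℤ) (u : V) (w : W),
    H.proj p u = u → 0 < i → N₀ + (p - k - 1) < i → N₀ + (p - k - 1) ≤ (E : ℤ) →
    w ∈ M.OmegaSet N₀ → M.wmode H.a i (M.wmode u k w) = 0 := by
  intro E
  induction E using Nat.strong_induction_on with
  | _ E ih =>
  intro N₀ p k i u w hu hi hlt hle hw
  by_cases hneg : p - k - 1 < -N₀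
  · have h0 := hw p k u hneg
    rw [hu] at h0
    rw [h0, M.wmode_zero_right]
  push_neg at hneg
  have hj := M.jacobi H.a u w (i - N₀ - 1) (N₀ + 1) k
  have hL : ∀ t : ℕ,
      cchoose (N₀ + 1) t •
        M.wmode (H.mode H.a ((i - N₀ - 1) + t) u) ((N₀ + 1) + k - t) w = 0 := by
    intro t
    have hh := GRVertexAlgebra.mode_homog H.toGRVertexAlgebra H.a_wt hu ((i - N₀ - 1) + (t : ℤ))
    have h0 := hw (1 + p - ((i - N₀ - 1) + (t : ℤ)) - 1) ((N₀ + 1) + k - t)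
      (H.mode H.a ((i - N₀ - 1) + (t : ℤ)) u) (by omega)
    rw [hh] at h0
    rw [h0, smul_zero]
  have hR2 : ∀ t : ℕ,
      ((-1 : ℂ) ^ ((i - N₀ - 1) + t : ℤ) * cchoose (i - N₀ - 1) t) •
        M.wmode u (k + (i - N₀ - 1) - t) (M.wmode H.a ((N₀ + 1) + t) w) = 0 := by
    intro t
    have h0 := hw 1 ((N₀ + 1) + (t : ℤ)) H.a (by omega)
    rw [H.a_wt] at h0
    rw [h0, M.wmode_zero_right, smul_zero]
  have hR1 : ∀ t : ℕ, t ≠ 0 →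
      ((-1 : ℂ) ^ (t : ℕ) * cchoose (i - N₀ - 1) t) •
        M.wmode H.a ((N₀ + 1) + (i - N₀ - 1) - t) (M.wmode u (k + t) w) = 0 := by
    intro t ht
    by_cases hin : p - (k + (t : ℤ)) - 1 < -N₀
    · have h0 := hw p (k + (t : ℤ)) u hin
      rw [hu] at h0
      rw [h0, M.wmode_zero_right, smul_zero]
    · push_neg at hin
      have h0 : M.wmode H.a (i - (t : ℤ)) (M.wmode u (k + (t : ℤ)) w) = 0 :=
        ih (N₀ + (p - (k + (t : ℤ)) - 1)).toNat (by omega) N₀ p (k + (t : ℤ)) (i - (t : ℤ))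
          u w hu (by omega) (by omega) (by omega) hw
      rw [show (N₀ + 1) + (i - N₀ - 1) - (t : ℤ) = i - (t : ℤ) by ring, h0, smul_zero]
  rw [finsum_eq_zero_of_forall_eq_zero hL, finsum_eq_zero_of_forall_eq_zero hR2, sub_zero,
    finsum_eq_single _ 0 hR1] at hj
  simp only [Nat.cast_zero, pow_zero, cchoose_zero_right', mul_one, one_mul, one_smul,
    sub_zero, add_zero] at hj
  rw [show N₀ + 1 + (i - N₀ - 1) = i by ring] at hj
  exact hj.symm

/-- `α(i)` maps `Ω_{N₀}(W)` into `Ω_{N₀ - i}(W)` for `i > 0`. -/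
lemma filtL (i : ℤ) (hi : 0 < i) (N₀ : ℤ) (w : W) (hw : w ∈ M.OmegaSet N₀) :
    M.wmode H.a i w ∈ M.OmegaSet (N₀ - i) := by
  intro m' k' v' hlt
  have huh : H.proj m' (H.proj m' v') = H.proj m' v' := by rw [H.proj_idem, if_pos rfl]
  set u := H.proj m' v' with hudef
  have hterm : ∀ t : ℕ, cchoose k' t • M.wmode (H.mode u (t : ℤ) H.a) (k' + i - t) w = 0 := by
    intro t
    have hh := GRVertexAlgebra.mode_homog H.toGRVertexAlgebra huh H.a_wt (t : ℤ)
    have h0 := hw (m' + 1 - (t : ℤ) - 1) (k' + i - t) (H.mode u (t : ℤ) H.a) (by omega)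
    rw [hh] at h0
    rw [h0, smul_zero]
  have hc := wcomm H M u H.a w k' i
  rw [finsum_eq_zero_of_forall_eq_zero hterm, sub_eq_zero] at hc
  have h1 : M.wmode H.a i (M.wmode u k' w) = 0 :=
    crux H M (N₀ + (m' - k' - 1)).toNat N₀ m' k' i u w huh hi (by omega) (by omega) hw
  rw [hc, h1]

end ModAux

section PhiAux

variable {V W : Type} [AddCommGroup V] [Module ℂ V] [AddCommGroup W] [Module ℂ W]
variable (H : HeisenbergVOA V) (M : LBGModule H.toGRVertexAlgebra W)
variable (φ : (Multiset ℕ+ →₀ ↥(LBGModule.smallOmega H M)) ≃ₗ[ℂ] W)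

/-- Monomial vectors of degree `≤ wt μ` lie in `Ω_{wt μ}(W)`-style vanishing. -/
lemma phi_single_mode_zero
    (hφ0 : ∀ w : ↥(LBGModule.smallOmega H M), φ (Finsupp.single 0 w) = (w : W))
    (hφ : ∀ (i : ℕ+) (μ : Multiset ℕ+) (w : ↥(LBGModule.smallOmega H M)),
      φ (Finsupp.single (i ::ₘ μ) w) = M.wmode H.a (-(i : ℤ)) (φ (Finsupp.single μ w)))
    (μ : Multiset ℕ+) :
    ∀ (w₀ : ↥(LBGModule.smallOmega H M)) (v : V) (m k : ℤ), H.proj m v = v →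
      m - k - 1 < -((μ.map fun i : ℕ+ => (i : ℕ)).sum : ℤ) →
      M.wmode v k (φ (Finsupp.single μ w₀)) = 0 := by
  induction μ using Multiset.induction_on with
  | empty =>
      intro w₀ v m k hv hk
      simp only [Multiset.map_zero, Multiset.sum_zero, Nat.cast_zero, neg_zero] at hk
      rw [hφ0 w₀]
      exact homog_mode_omega H M v m hv _ w₀.2 k hk
  | cons i ν ih =>
      intro w₀ v m k hv hk
      simp only [Multiset.map_cons, Multiset.sum_cons, Nat.cast_add] at hk
      rw [hφ i ν w₀]
      have hc := wcomm H M v H.a (φ (Finsupp.single ν w₀)) k (-(i : ℤ))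
      have hipos : (1 : ℤ) ≤ (i : ℕ) := by exact_mod_cast i.one_le
      have h1 : M.wmode v k (φ (Finsupp.single ν w₀)) = 0 :=
        ih w₀ v m k hv (by omega)
      have hterm : ∀ t : ℕ,
          cchoose k t • M.wmode (H.mode v (t : ℤ) H.a) (k + -(i : ℤ) - t)
            (φ (Finsupp.single ν w₀)) = 0 := by
        intro t
        have hh := GRVertexAlgebra.mode_homog H.toGRVertexAlgebra hv H.a_wt (t : ℤ)
        rw [ih w₀ (H.mode v (t : ℤ) H.a) (m + 1 - (t : ℤ) - 1) (k + -(i : ℤ) - t) hh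
          (by omega), smul_zero]
      rw [finsum_eq_zero_of_forall_eq_zero hterm, h1, M.wmode_zero_right, sub_zero] at hc
      exact hc

lemma alpha_on_single
    (hφ0 : ∀ w : ↥(LBGModule.smallOmega H M), φ (Finsupp.single 0 w) = (w : W))
    (hφ : ∀ (i : ℕ+) (μ : Multiset ℕ+) (w : ↥(LBGModule.smallOmega H M)),
      φ (Finsupp.single (i ::ₘ μ) w) = M.wmode H.a (-(i : ℤ)) (φ (Finsupp.single μ w)))
    (i : ℕ+) (μ : Multiset ℕ+) :
    ∀ w₀ : ↥(LBGModule.smallOmega H M),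
      M.wmode H.a ((i : ℕ) : ℤ) (φ (Finsupp.single μ w₀))
        = (((i : ℕ) : ℂ) * (μ.count i : ℂ)) • φ (Finsupp.single (μ.erase i) w₀) := by
  induction μ using Multiset.induction_on with
  | empty =>
      intro w₀
      rw [hφ0 w₀, w₀.2 ((i : ℕ) : ℤ) (by exact_mod_cast i.pos)]
      simp
  | cons j ν ih =>
      intro w₀
      rw [hφ j ν w₀]
      have hh := wheis H M ((i : ℕ) : ℤ) (-(j : ℤ)) (φ (Finsupp.single ν w₀))
      rw [sub_eq_iff_eq_add] at hh
      rw [hh, ih w₀, M.wmode_smul_right, ← hφ j (ν.erase i) w₀]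
      by_cases hij : i = j
      · subst hij
        rw [if_pos (by push_cast; ring), Multiset.count_cons_self, Multiset.erase_cons_head]
        by_cases hmem : i ∈ ν
        · rw [Multiset.cons_erase hmem, ← add_smul]
          congr 1
          push_cast
          ring
        · rw [Multiset.count_eq_zero_of_notMem hmem]
          push_cast
          rw [mul_zero, zero_smul, add_zero, mul_one]
      · have hne : ¬(((i : ℕ) : ℤ) + -(j : ℤ) = 0) := by
          intro h
          apply hij
          have : ((i : ℕ) : ℤ) = ((j : ℕ) : ℤ) := by push_cast at h ⊢; omega
          exact_mod_cast this
        rw [if_neg hne, zero_add, Multiset.count_cons_of_ne hij,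
          Multiset.erase_cons_tail ν (Ne.symm hij)]

lemma coord_alpha
    (hφ0 : ∀ w : ↥(LBGModule.smallOmega H M), φ (Finsupp.single 0 w) = (w : W))
    (hφ : ∀ (i : ℕ+) (μ : Multiset ℕ+) (w : ↥(LBGModule.smallOmega H M)),
      φ (Finsupp.single (i ::ₘ μ) w) = M.wmode H.a (-(i : ℤ)) (φ (Finsupp.single μ w)))
    (i : ℕ+) (ν₀ : Multiset ℕ+) (f : Multiset ℕ+ →₀ ↥(LBGModule.smallOmega H M)) :
    (φ.symm (M.wmode H.a ((i : ℕ) : ℤ) (φ f))) ν₀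
      = (((i : ℕ) : ℂ) * (((i ::ₘ ν₀).count i : ℕ) : ℂ)) • f (i ::ₘ ν₀) := by
  induction f using Finsupp.induction_linear with
  | zero =>
      rw [map_zero, M.wmode_zero_right, map_zero, Finsupp.zero_apply, Finsupp.zero_apply,
        smul_zero]
  | add f g hf hg =>
      rw [map_add, M.wmode_add_right, map_add, Finsupp.add_apply, hf, hg, Finsupp.add_apply,
        smul_add]
  | single μ b =>
      rw [alpha_on_single H M φ hφ0 hφ i μ b, map_smul, LinearEquiv.symm_apply_apply,
        Finsupp.smul_apply, Finsupp.single_apply, Finsupp.single_apply]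
      by_cases h1 : μ = i ::ₘ ν₀
      · subst h1
        rw [Multiset.erase_cons_head, if_pos rfl, if_pos rfl]
      · rw [if_neg h1, smul_zero]
        by_cases h2 : μ.erase i = ν₀
        · have hnotmem : i ∉ μ := by
            intro hm
            exact h1 (by rw [← Multiset.cons_erase hm, h2])
          rw [if_pos h2, Multiset.count_eq_zero_of_notMem hnotmem]
          push_cast
          rw [mul_zero, zero_smul]
        · rw [if_neg h2, smul_zero]

/-- Finsupps supported in weight `≤ t`. -/
def Ksub (t : ℤ) : Submodule ℂ (Multiset ℕ+ →₀ ↥(LBGModule.smallOmega H M)) where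
  carrier := {f | ∀ ν : Multiset ℕ+, t < ((ν.map fun i : ℕ+ => (i : ℕ)).sum : ℤ) → f ν = 0}
  add_mem' := by
    intro f g hf hg ν hν
    rw [Finsupp.add_apply, hf ν hν, hg ν hν, add_zero]
  zero_mem' := fun ν _ => rfl
  smul_mem' := by
    intro c f hf ν hν
    rw [Finsupp.smul_apply, hf ν hν, smul_zero]

lemma span_subset_K (t : ℕ) (x : W)
    (hx : x ∈ Submodule.span ℂ
      {x : W | ∃ (μ : Multiset ℕ+) (w : ↥(LBGModule.smallOmega H M)),
        (μ.map (fun i : ℕ+ => (i : ℕ))).sum ≤ t ∧ x = φ (Finsupp.single μ w)}) :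
    ∀ ν : Multiset ℕ+, (t : ℤ) < ((ν.map fun i : ℕ+ => (i : ℕ)).sum : ℤ) → φ.symm x ν = 0 := by
  have hle : Submodule.span ℂ
      {x : W | ∃ (μ : Multiset ℕ+) (w : ↥(LBGModule.smallOmega H M)),
        (μ.map (fun i : ℕ+ => (i : ℕ))).sum ≤ t ∧ x = φ (Finsupp.single μ w)}
      ≤ (Ksub H M (t : ℤ)).comap (φ.symm : W →ₗ[ℂ] _) := by
    rw [Submodule.span_le]
    rintro y ⟨μ, w₀, hwt, rfl⟩
    simp only [SetLike.mem_coe, Submodule.mem_comap, LinearEquiv.coe_coe]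
    intro ν hν
    rw [LinearEquiv.symm_apply_apply, Finsupp.single_apply]
    rw [if_neg]
    intro h
    subst h
    omega
  have := hle hx
  simp only [Submodule.mem_comap, LinearEquiv.coe_coe] at this
  exact this

lemma K_to_span (t : ℕ) (f : Multiset ℕ+ →₀ ↥(LBGModule.smallOmega H M))
    (hf : ∀ ν : Multiset ℕ+, (t : ℤ) < ((ν.map fun i : ℕ+ => (i : ℕ)).sum : ℤ) → f ν = 0) :
    φ f ∈ Submodule.span ℂ
      {x : W | ∃ (μ : Multiset ℕ+) (w : ↥(LBGModule.smallOmega H M)),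
        (μ.map (fun i : ℕ+ => (i : ℕ))).sum ≤ t ∧ x = φ (Finsupp.single μ w)} := by
  have hrepr : φ f = f.sum fun μ b => φ (Finsupp.single μ b) := by
    conv_lhs => rw [← Finsupp.sum_single f]
    exact map_finsuppSum _ _ _
  rw [hrepr]
  apply Submodule.sum_mem
  intro μ hμ
  by_cases hwt : (μ.map (fun i : ℕ+ => (i : ℕ))).sum ≤ t
  · exact Submodule.subset_span ⟨μ, f μ, hwt, rfl⟩
  · have h0 : f μ = 0 := hf μ (by omega)
    simp only [h0, Finsupp.single_zero, map_zero]
    exact Submodule.zero_mem _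

lemma Bspan
    (hφ0 : ∀ w : ↥(LBGModule.smallOmega H M), φ (Finsupp.single 0 w) = (w : W))
    (hφ : ∀ (i : ℕ+) (μ : Multiset ℕ+) (w : ↥(LBGModule.smallOmega H M)),
      φ (Finsupp.single (i ::ₘ μ) w) = M.wmode H.a (-(i : ℤ)) (φ (Finsupp.single μ w))) :
    ∀ (n : ℕ) (w : W), w ∈ M.OmegaSet (n : ℤ) →
      w ∈ Submodule.span ℂ
        {x : W | ∃ (μ : Multiset ℕ+) (w : ↥(LBGModule.smallOmega H M)),
          (μ.map (fun i : ℕ+ => (i : ℕ))).sum ≤ n ∧ x = φ (Finsupp.single μ w)} := by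
  intro n
  induction n using Nat.strong_induction_on with
  | _ n ih =>
  intro w hw
  have hfw : φ (φ.symm w) = w := φ.apply_symm_apply w
  have hK : ∀ μ₀ : Multiset ℕ+,
      (n : ℤ) < ((μ₀.map fun i : ℕ+ => (i : ℕ)).sum : ℤ) → φ.symm w μ₀ = 0 := by
    intro μ₀ hμ₀
    have hne : μ₀ ≠ 0 := by
      rintro rfl
      simp only [Multiset.map_zero, Multiset.sum_zero, Nat.cast_zero] at hμ₀
      omega
    obtain ⟨i, hi⟩ := Multiset.exists_mem_of_ne_zero hne
    have hcons : i ::ₘ μ₀.erase i = μ₀ := Multiset.cons_erase hi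
    have hco := coord_alpha H M φ hφ0 hφ i (μ₀.erase i) (φ.symm w)
    rw [hcons, hfw] at hco
    have hwtrel : (μ₀.map fun i : ℕ+ => (i : ℕ)).sum
        = (i : ℕ) + ((μ₀.erase i).map fun i : ℕ+ => (i : ℕ)).sum := by
      conv_lhs => rw [← hcons]
      simp
    have hz : (φ.symm (M.wmode H.a ((i : ℕ) : ℤ) w)) (μ₀.erase i) = 0 := by
      by_cases hin : (i : ℕ) ≤ n
      · have h1 : M.wmode H.a ((i : ℕ) : ℤ) w ∈ M.OmegaSet ((n : ℤ) - ((i : ℕ) : ℤ)) :=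
          filtL H M ((i : ℕ) : ℤ) (by exact_mod_cast i.pos) (n : ℤ) w hw
        rw [show (n : ℤ) - ((i : ℕ) : ℤ) = ((n - (i : ℕ) : ℕ) : ℤ) by omega] at h1
        have h3 := ih (n - (i : ℕ)) (by have := i.pos; omega) _ h1
        exact span_subset_K H M φ (n - (i : ℕ)) _ h3 (μ₀.erase i) (by omega)
      · have h0 : M.wmode H.a ((i : ℕ) : ℤ) w = 0 := by
          have := hw 1 ((i : ℕ) : ℤ) H.a (by omega)
          rwa [H.a_wt] at this
        rw [h0, map_zero]
        rfl
    rw [hz] at hco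
    have hcne : (((i : ℕ) : ℂ) * ((μ₀.count i : ℕ) : ℂ)) ≠ 0 := by
      apply mul_ne_zero
      · exact_mod_cast i.ne_zero
      · exact Nat.cast_ne_zero.mpr (Multiset.count_pos.mpr hi).ne'
    rcases smul_eq_zero.mp hco.symm with hc | hv
    · exact absurd hc hcne
    · exact hv
  have := K_to_span H M φ n (φ.symm w) hK
  rwa [hfw] at this

end PhiAux

end HeisenbergAux


/-- Let `W` be a lower-bounded generalized `M(1)`-module, identified with `M(1) ⊗ Ω(W)`
via `φ` as in the Heisenberg structure theorem.  Then for every `n ∈ ℕ`, `Ω_n(W)` is the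
span of the vectors `α(-i_1) ⋯ α(-i_j) 𝟙 ⊗ w` with `i_1 + ⋯ + i_j ≤ n`, and hence
`Gr_n(W) = Ω_n(W)/Ω_{n-1}(W)` is spanned by the classes of those with
`i_1 + ⋯ + i_j = n`. -/
theorem heisenberg_Omega_n_span {V W : Type} [AddCommGroup V] [Module ℂ V]
    [AddCommGroup W] [Module ℂ W]
    (H : HeisenbergVOA V) (M : LBGModule H.toGRVertexAlgebra W)
    (φ : (Multiset ℕ+ →₀ ↥(LBGModule.smallOmega H M)) ≃ₗ[ℂ] W)
    (hφ0 : ∀ w : ↥(LBGModule.smallOmega H M), φ (Finsupp.single 0 w) = (w : W))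
    (hφ : ∀ (i : ℕ+) (μ : Multiset ℕ+) (w : ↥(LBGModule.smallOmega H M)),
      φ (Finsupp.single (i ::ₘ μ) w) = M.wmode H.a (-(i : ℤ)) (φ (Finsupp.single μ w)))
    (n : ℕ) :
    M.OmegaSet (n : ℤ) = ↑(Submodule.span ℂ
      {x : W | ∃ (μ : Multiset ℕ+) (w : ↥(LBGModule.smallOmega H M)),
        (μ.map (fun i : ℕ+ => (i : ℕ))).sum ≤ n ∧ x = φ (Finsupp.single μ w)}) ∧
    M.OmegaSet (n : ℤ) ⊆ ↑(Submodule.span ℂ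
      ({x : W | ∃ (μ : Multiset ℕ+) (w : ↥(LBGModule.smallOmega H M)),
          (μ.map (fun i : ℕ+ => (i : ℕ))).sum = n ∧ x = φ (Finsupp.single μ w)}
        ∪ M.OmegaSet ((n : ℤ) - 1))) := by
  constructor
  · apply Set.Subset.antisymm
    · intro w hw
      exact Bspan H M φ hφ0 hφ n w hw
    · have hle : Submodule.span ℂ
          {x : W | ∃ (μ : Multiset ℕ+) (w : ↥(LBGModule.smallOmega H M)),
            (μ.map (fun i : ℕ+ => (i : ℕ))).sum ≤ n ∧ x = φ (Finsupp.single μ w)}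
          ≤ OmegaSub H M (n : ℤ) := by
        rw [Submodule.span_le]
        rintro x ⟨μ, w₀, hwt, rfl⟩
        simp only [SetLike.mem_coe]
        intro m k v hlt
        have hp : H.proj m (H.proj m v) = H.proj m v := by rw [H.proj_idem, if_pos rfl]
        exact phi_single_mode_zero H M φ hφ0 hφ μ w₀ (H.proj m v) m k hp (by omega)
      intro x hx
      exact hle hx
  · intro w hw
    have h1 := Bspan H M φ hφ0 hφ n w hw
    have hle : Submodule.span ℂ
        {x : W | ∃ (μ : Multiset ℕ+) (w : ↥(LBGModule.smallOmega H M)),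
          (μ.map (fun i : ℕ+ => (i : ℕ))).sum ≤ n ∧ x = φ (Finsupp.single μ w)}
        ≤ Submodule.span ℂ
          ({x : W | ∃ (μ : Multiset ℕ+) (w : ↥(LBGModule.smallOmega H M)),
              (μ.map (fun i : ℕ+ => (i : ℕ))).sum = n ∧ x = φ (Finsupp.single μ w)}
            ∪ M.OmegaSet ((n : ℤ) - 1)) := by
      rw [Submodule.span_le]
      rintro x ⟨μ, w₀, hwt, rfl⟩
      apply Submodule.subset_span
      rcases eq_or_lt_of_le hwt with he | hlt
      · exact Or.inl ⟨μ, w₀, he, rfl⟩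
      · refine Or.inr ?_
        intro m k v hlt2
        have hp : H.proj m (H.proj m v) = H.proj m v := by rw [H.proj_idem, if_pos rfl]
        exact phi_single_mode_zero H M φ hφ0 hφ μ w₀ (H.proj m v) m k hp (by omega)
    exact hle h1
end
end

section
/- Let V be a vertex operator algebra and n ∈ ℕ with n > 0. Then the map A_n(V) → A_{n−1}(V) given by v + O_n(V) ↦ v + O_{n−1}(V) is a well-defined surjective homomorphism of associative algebras. -/
noncomputable section

open scoped BigOperators

section ZhuAuxC

private lemma cchoose_zero'' (a : ℤ) : cchoose a 0 = 1 := by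
  simp [cchoose]

private lemma prod_succ_left' (a : ℤ) (i : ℕ) :
    (∏ j ∈ Finset.range (i + 1), ((a : ℂ) - (j : ℂ)))
      = (a : ℂ) * ∏ j ∈ Finset.range i, (((a - 1 : ℤ) : ℂ) - (j : ℂ)) := by
  rw [Finset.prod_range_succ']
  have h : ∀ j ∈ Finset.range i,
      ((a : ℂ) - (((j + 1 : ℕ)) : ℂ)) = (((a - 1 : ℤ) : ℂ) - (j : ℂ)) := by
    intro j _
    push_cast
    ring
  rw [Finset.prod_congr rfl h]
  push_cast
  ring

private lemma cchoose_pascal (a : ℤ) (i : ℕ) :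
    cchoose (a + 1) (i + 1) = cchoose a (i + 1) + cchoose a i := by
  unfold cchoose
  rw [prod_succ_left' (a + 1) i, Finset.prod_range_succ, Nat.factorial_succ]
  have h1 : (a + 1 - 1 : ℤ) = a := by ring
  rw [h1]
  have h2 : ((i.factorial : ℂ)) ≠ 0 := Nat.cast_ne_zero.mpr (Nat.factorial_ne_zero i)
  have h3 : ((i : ℂ) + 1) ≠ 0 := Nat.cast_add_one_ne_zero i
  push_cast
  field_simp
  ring

private lemma cchoose_succ_eq (a : ℤ) (i : ℕ) :
    ((i : ℂ) + 1) * cchoose a (i + 1) = (a : ℂ) * cchoose (a - 1) i := by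
  unfold cchoose
  rw [prod_succ_left' a i, Nat.factorial_succ]
  have h2 : ((i.factorial : ℂ)) ≠ 0 := Nat.cast_ne_zero.mpr (Nat.factorial_ne_zero i)
  have h3 : ((i : ℂ) + 1) ≠ 0 := Nat.cast_add_one_ne_zero i
  push_cast
  field_simp

end ZhuAuxC

namespace GRVertexAlgebra

variable {V : Type} [AddCommGroup V] [Module ℂ V] (VA : GRVertexAlgebra V)

/-- `Res_x x^N (1+x)^a Y(u,x) v`. -/
def Tres (u : V) (a N : ℤ) (v : V) : V :=
  ∑ᶠ i : ℕ, cchoose a i • VA.mode u (N + i) v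

lemma exists_bound (u v : V) (N : ℤ) :
    ∃ M : ℕ, ∀ i : ℕ, M ≤ i → VA.mode u (N + i) v = 0 := by
  obtain ⟨N₀, h₀⟩ := VA.lower_trunc u v
  refine ⟨(N₀ - N).toNat, fun i hi => h₀ _ ?_⟩
  omega

lemma Tres_eq_sum (u v : V) (a N : ℤ) (M : ℕ)
    (hM : ∀ i : ℕ, M ≤ i → VA.mode u (N + i) v = 0) :
    VA.Tres u a N v = ∑ i ∈ Finset.range M, cchoose a i • VA.mode u (N + i) v := by
  apply finsum_eq_sum_of_support_subset
  intro i hi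
  simp only [Function.mem_support] at hi
  simp only [Finset.coe_range, Set.mem_Iio]
  by_contra h
  exact hi (by rw [hM i (by omega), smul_zero])

lemma Tres_support (u v : V) (a N : ℤ) :
    (Function.support fun i : ℕ => cchoose a i • VA.mode u (N + i) v).Finite := by
  obtain ⟨M, hM⟩ := VA.exists_bound u v N
  refine Set.Finite.subset (Finset.range M).finite_toSet fun i hi => ?_
  simp only [Function.mem_support] at hi
  simp only [Finset.coe_range, Set.mem_Iio]
  by_contra h
  exact hi (by rw [hM i (by omega), smul_zero])

lemma Tres_zero' (a N : ℤ) (v : V) : VA.Tres 0 a N v = 0 := by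
  unfold Tres
  simp [VA.mode_zero_left]

lemma Tres_add_left (u u' : V) (a N : ℤ) (v : V) :
    VA.Tres (u + u') a N v = VA.Tres u a N v + VA.Tres u' a N v := by
  unfold Tres
  rw [← finsum_add_distrib (VA.Tres_support u v a N) (VA.Tres_support u' v a N)]
  exact finsum_congr fun i => by rw [VA.mode_add_left, smul_add]

lemma proj_eq_of_homog {u : V} {w : ℤ} (hu : VA.proj w u = u) (m : ℤ) :
    VA.proj m u = if m = w then u else 0 := by
  conv_lhs => rw [← hu]
  rw [VA.proj_idem]
  simp [hu]

lemma resPow_eq_finsum_Tres (N l : ℤ) (u v : V) :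
    VA.resPow N l u v = ∑ᶠ m : ℤ, VA.Tres (VA.proj m u) (l + m) N v := rfl

lemma resPow_homog {u : V} {w : ℤ} (hu : VA.proj w u = u) (N l : ℤ) (v : V) :
    VA.resPow N l u v = VA.Tres u (l + w) N v := by
  rw [VA.resPow_eq_finsum_Tres]
  rw [finsum_eq_single _ w (fun m hm => by
    rw [VA.proj_eq_of_homog hu m, if_neg hm, VA.Tres_zero'])]
  rw [hu]

lemma Tres_proj_support (u v : V) (N l : ℤ) :
    (Function.support fun m : ℤ => VA.Tres (VA.proj m u) (l + m) N v).Finite := by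
  refine Set.Finite.subset (VA.proj_support_finite u) fun m hm => ?_
  simp only [Function.mem_support] at hm ⊢
  intro h
  exact hm (by rw [h, VA.Tres_zero'])

lemma resPow_add_left' (N l : ℤ) (u u' v : V) :
    VA.resPow N l (u + u') v = VA.resPow N l u v + VA.resPow N l u' v := by
  rw [VA.resPow_eq_finsum_Tres, VA.resPow_eq_finsum_Tres, VA.resPow_eq_finsum_Tres,
    ← finsum_add_distrib (VA.Tres_proj_support u v N l) (VA.Tres_proj_support u' v N l)]
  exact finsum_congr fun m => by rw [map_add, VA.Tres_add_left]

lemma resPow_sum_left (N l : ℤ) (v : V) {ι : Type*} (s : Finset ι) (g : ι → V) :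
    VA.resPow N l (∑ i ∈ s, g i) v = ∑ i ∈ s, VA.resPow N l (g i) v := by
  classical
  induction s using Finset.induction_on with
  | empty => simpa using VA.resPow_zero_left N l v
  | insert _ _ h ih => rw [Finset.sum_insert h, Finset.sum_insert h, VA.resPow_add_left', ih]

lemma starN_sum_left (n : ℕ) (v : V) {ι : Type*} (s : Finset ι) (g : ι → V) :
    VA.starN n (∑ i ∈ s, g i) v = ∑ i ∈ s, VA.starN n (g i) v := by
  unfold starN
  simp only [VA.resPow_sum_left, Finset.smul_sum]
  exact Finset.sum_comm

lemma exists_decomp (u : V) :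
    ∃ s : Finset ℤ, u = ∑ m ∈ s, VA.proj m u := by
  refine ⟨(VA.proj_support_finite u).toFinset, ?_⟩
  rw [← finsum_eq_sum _ (VA.proj_support_finite u)]
  exact (VA.proj_sum u).symm

lemma L0op_one : VA.L0op VA.one = 0 := by
  unfold L0op
  rw [finsum_eq_single _ 0 (fun m hm => by
    rw [VA.proj_eq_of_homog VA.one_homogeneous m, if_neg hm, smul_zero])]
  simp

lemma L0op_homog {u : V} {w : ℤ} (hu : VA.proj w u = u) :
    VA.L0op u = (w : ℂ) • u := by
  unfold L0op
  rw [finsum_eq_single _ w (fun m hm => by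
    rw [VA.proj_eq_of_homog hu m, if_neg hm, smul_zero])]
  rw [hu]

lemma L0_support (x : V) :
    (Function.support fun m : ℤ => (m : ℂ) • VA.proj m x).Finite := by
  refine Set.Finite.subset (VA.proj_support_finite x) fun m hm => ?_
  simp only [Function.mem_support] at hm ⊢
  intro h
  exact hm (by rw [h, smul_zero])

lemma proj_L0op (k : ℤ) (x : V) :
    VA.proj k (VA.L0op x) = (k : ℂ) • VA.proj k x := by
  unfold L0op
  have hmap : VA.proj k (∑ᶠ m : ℤ, (m : ℂ) • VA.proj m x)
      = ∑ᶠ m : ℤ, VA.proj k ((m : ℂ) • VA.proj m x) :=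
    (VA.proj k).toAddMonoidHom.map_finsum (VA.L0_support x)
  rw [hmap]
  rw [finsum_eq_single _ k (fun m hm => by
    rw [map_smul, VA.proj_idem, if_neg (Ne.symm hm), smul_zero])]
  rw [map_smul, VA.proj_idem, if_pos rfl]

lemma homog_of_L0_s16 {x : V} {w : ℤ} (hx : VA.L0op x = (w : ℂ) • x) :
    VA.proj w x = x := by
  have hk : ∀ m : ℤ, m ≠ w → VA.proj m x = 0 := by
    intro m hm
    have h1 := VA.proj_L0op m x
    rw [hx, map_smul] at h1
    have h2 : ((m : ℂ) - (w : ℂ)) • VA.proj m x = 0 := by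
      rw [sub_smul, h1, sub_self]
    have h3 : ((m : ℂ) - (w : ℂ)) ≠ 0 := by
      rw [sub_ne_zero]
      exact_mod_cast hm
    rcases smul_eq_zero.mp h2 with h | h
    · exact absurd h h3
    · exact h
  have hs := VA.proj_sum x
  rw [finsum_eq_single _ w (fun m hm => hk m hm)] at hs
  exact hs

lemma homog_Lneg1 {u : V} {w : ℤ} (hu : VA.proj w u = u) :
    VA.proj (w + 1) (VA.Lneg1op u) = VA.Lneg1op u := by
  apply VA.homog_of_L0_s16
  have hb := VA.L0_bracket u VA.one (-2)
  have hone : (∑ᶠ m : ℤ, (m : ℂ) • VA.proj m VA.one) = 0 := VA.L0op_one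
  have hu0 : (∑ᶠ m : ℤ, (m : ℂ) • VA.proj m u) = (w : ℂ) • u := VA.L0op_homog hu
  rw [hone, hu0, VA.mode_zero_right, sub_zero, VA.mode_smul_left] at hb
  show VA.L0op (VA.Lneg1op u) = ((w + 1 : ℤ) : ℂ) • VA.Lneg1op u
  unfold L0op Lneg1op
  rw [hb]
  push_cast
  module

lemma Tres_shift (u : V) (a N : ℤ) (v : V) :
    VA.Tres u (a + 1) N v = VA.Tres u a N v + VA.Tres u a (N + 1) v := by
  obtain ⟨M, hM⟩ := VA.exists_bound u v N
  have hM1 : ∀ i : ℕ, M ≤ i → VA.mode u (N + 1 + i) v = 0 := by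
    intro i hi
    have h := hM (i + 1) (by omega)
    rw [show N + 1 + (i : ℤ) = N + ((i + 1 : ℕ) : ℤ) by push_cast; ring]
    exact h
  rw [VA.Tres_eq_sum u v (a + 1) N (M + 1) (fun i hi => hM i (by omega)),
      VA.Tres_eq_sum u v a N (M + 1) (fun i hi => hM i (by omega)),
      VA.Tres_eq_sum u v a (N + 1) (M + 1) (fun i hi => hM1 i (by omega))]
  rw [Finset.sum_range_succ' (fun i => cchoose (a + 1) i • VA.mode u (N + i) v) M,
      Finset.sum_range_succ' (fun i => cchoose a i • VA.mode u (N + i) v) M,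
      Finset.sum_range_succ (fun i => cchoose a i • VA.mode u (N + 1 + i) v) M]
  rw [hM1 M le_rfl, smul_zero, add_zero]
  have hsum : ∀ i ∈ Finset.range M,
      cchoose (a + 1) (i + 1) • VA.mode u (N + ((i + 1 : ℕ) : ℤ)) v
        = cchoose a (i + 1) • VA.mode u (N + ((i + 1 : ℕ) : ℤ)) v
          + cchoose a i • VA.mode u (N + 1 + (i : ℤ)) v := by
    intro i _
    rw [show N + 1 + (i : ℤ) = N + ((i + 1 : ℕ) : ℤ) by push_cast; ring,
      cchoose_pascal, add_smul]
  rw [Finset.sum_congr rfl hsum, Finset.sum_add_distrib]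
  simp only [cchoose_zero'', Nat.cast_zero, add_zero, one_smul]
  abel

lemma Tres_deriv (u v : V) (a N : ℤ) :
    VA.Tres (VA.mode u (-2) VA.one) a N v
      = (-(N : ℂ)) • VA.Tres u a (N - 1) v - (a : ℂ) • VA.Tres u (a - 1) N v := by
  obtain ⟨M, hM⟩ := VA.exists_bound u v (N - 1)
  have hN : ∀ i : ℕ, M ≤ i → VA.mode u (N + i) v = 0 := by
    intro i hi
    have h := hM (i + 1) (by omega)
    rw [show N + (i : ℤ) = N - 1 + ((i + 1 : ℕ) : ℤ) by push_cast; ring]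
    exact h
  have hL : ∀ i : ℕ, M ≤ i → VA.mode (VA.mode u (-2) VA.one) (N + i) v = 0 := by
    intro i hi
    rw [VA.Lneg1_deriv, show N + (i : ℤ) - 1 = N - 1 + (i : ℤ) by ring, hM i hi, smul_zero]
  rw [VA.Tres_eq_sum _ v a N (M + 1) (fun i hi => hL i (by omega)),
      VA.Tres_eq_sum u v a (N - 1) (M + 1) (fun i hi => hM i (by omega)),
      VA.Tres_eq_sum u v (a - 1) N (M + 1) (fun i hi => hN i (by omega))]
  have hexp : ∀ i ∈ Finset.range (M + 1),
      cchoose a i • VA.mode (VA.mode u (-2) VA.one) (N + i) v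
        = (-(N : ℂ)) • cchoose a i • VA.mode u (N - 1 + i) v
          + (-(i : ℂ) * cchoose a i) • VA.mode u (N - 1 + i) v := by
    intro i _
    rw [VA.Lneg1_deriv, show N + (i : ℤ) - 1 = N - 1 + (i : ℤ) by ring]
    push_cast
    module
  rw [Finset.sum_congr rfl hexp, Finset.sum_add_distrib, ← Finset.smul_sum]
  have h2 : ∑ i ∈ Finset.range (M + 1), (-(i : ℂ) * cchoose a i) • VA.mode u (N - 1 + i) v
      = ∑ i ∈ Finset.range (M + 1), (-(a : ℂ)) • cchoose (a - 1) i • VA.mode u (N + i) v := by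
    rw [Finset.sum_range_succ' (fun i => (-(i : ℂ) * cchoose a i) • VA.mode u (N - 1 + i) v) M,
        Finset.sum_range_succ (fun i => (-(a : ℂ)) • cchoose (a - 1) i • VA.mode u (N + i) v) M]
    rw [hN M le_rfl, smul_zero, smul_zero, add_zero]
    simp only [Nat.cast_zero, neg_zero, zero_mul, zero_smul, add_zero]
    refine Finset.sum_congr rfl fun i _ => ?_
    rw [smul_smul]
    rw [show N - 1 + ((i + 1 : ℕ) : ℤ) = N + (i : ℤ) by push_cast; ring]
    congr 1
    push_cast
    have h := cchoose_succ_eq a i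
    linear_combination -h
  rw [h2, ← Finset.smul_sum]
  module

lemma circN_mem (n : ℕ) (u v : V) (hu : VA.Homogeneous u) :
    VA.circN n u v ∈ VA.ZhuO n :=
  Submodule.subset_span (Or.inl ⟨u, v, hu, rfl⟩)

lemma keyT (n : ℕ) : ∀ m k : ℕ, k ≤ m → ∀ (u : V) (w : ℤ), VA.proj w u = u → ∀ v : V,
    VA.Tres u ((n : ℤ) + w + k) (-(2 * (n : ℤ) + 2) - m) v ∈ VA.ZhuO n := by
  intro m
  induction m with
  | zero =>
    intro k hk u w hu v
    obtain rfl : k = 0 := by omega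
    have h := VA.circN_mem n u v ⟨w, hu⟩
    rw [circN, VA.resPow_homog hu] at h
    convert h using 2 <;> push_cast <;> ring
  | succ m IH =>
    have htop : ∀ (u : V) (w : ℤ), VA.proj w u = u → ∀ v : V,
        VA.Tres u ((n : ℤ) + w + m + 1) (-(2 * (n : ℤ) + 2) - m - 1) v ∈ VA.ZhuO n := by
      intro u w hu v
      have hL : VA.proj (w + 1) (VA.Lneg1op u) = VA.Lneg1op u := VA.homog_Lneg1 hu
      have m1 : VA.Tres (VA.Lneg1op u) ((n : ℤ) + w + m + 1) (-(2 * (n : ℤ) + 2) - m) v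
          ∈ VA.ZhuO n := by
        have h := IH m le_rfl (VA.Lneg1op u) (w + 1) hL v
        convert h using 2 <;> push_cast <;> ring
      have m2 : VA.Tres u ((n : ℤ) + w + m) (-(2 * (n : ℤ) + 2) - m) v ∈ VA.ZhuO n := by
        have h := IH m le_rfl u w hu v
        convert h using 2 <;> push_cast <;> ring
      have hNe : (-((-(2 * (n : ℤ) + 2) - m : ℤ) : ℂ)) ≠ 0 := by
        have h1 : -(-(2 * (n : ℤ) + 2) - (m : ℤ)) = 2 * (n : ℤ) + 2 + m := by ring
        rw [show (-((-(2 * (n : ℤ) + 2) - m : ℤ) : ℂ)) = (((2 * (n : ℤ) + 2 + m : ℤ)) : ℂ) by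
          push_cast; ring]
        have : (0 : ℤ) < 2 * (n : ℤ) + 2 + m := by omega
        exact_mod_cast this.ne'
      have h1 : VA.Tres (VA.Lneg1op u) ((n : ℤ) + w + m + 1) (-(2 * (n : ℤ) + 2) - m) v
          = (-((-(2 * (n : ℤ) + 2) - m : ℤ) : ℂ)) •
              VA.Tres u ((n : ℤ) + w + m + 1) (-(2 * (n : ℤ) + 2) - m - 1) v
            - (((n : ℤ) + w + m + 1 : ℤ) : ℂ) •
              VA.Tres u ((n : ℤ) + w + m) (-(2 * (n : ℤ) + 2) - m) v := by
        have h := VA.Tres_deriv u v ((n : ℤ) + w + m + 1) (-(2 * (n : ℤ) + 2) - m)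
        rw [show (n : ℤ) + w + m + 1 - 1 = (n : ℤ) + w + m by ring] at h
        exact h
      have hmem : (-((-(2 * (n : ℤ) + 2) - m : ℤ) : ℂ)) •
            VA.Tres u ((n : ℤ) + w + m + 1) (-(2 * (n : ℤ) + 2) - m - 1) v ∈ VA.ZhuO n := by
        have h2 : (-((-(2 * (n : ℤ) + 2) - m : ℤ) : ℂ)) •
              VA.Tres u ((n : ℤ) + w + m + 1) (-(2 * (n : ℤ) + 2) - m - 1) v
            = VA.Tres (VA.Lneg1op u) ((n : ℤ) + w + m + 1) (-(2 * (n : ℤ) + 2) - m) v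
              + (((n : ℤ) + w + m + 1 : ℤ) : ℂ) •
                VA.Tres u ((n : ℤ) + w + m) (-(2 * (n : ℤ) + 2) - m) v := by
          rw [h1]
          module
        rw [h2]
        exact Submodule.add_mem _ m1 (Submodule.smul_mem _ _ m2)
      have hfin := Submodule.smul_mem (VA.ZhuO n) (-((-(2 * (n : ℤ) + 2) - m : ℤ) : ℂ))⁻¹ hmem
      rwa [inv_smul_smul₀ hNe] at hfin
    have hdown : ∀ d k : ℕ, (k : ℤ) + d = (m : ℤ) + 1 → ∀ (u : V) (w : ℤ),
        VA.proj w u = u → ∀ v : V,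
        VA.Tres u ((n : ℤ) + w + k) (-(2 * (n : ℤ) + 2) - m - 1) v ∈ VA.ZhuO n := by
      intro d
      induction d with
      | zero =>
        intro k hk u w hu v
        obtain rfl : k = m + 1 := by omega
        have h := htop u w hu v
        convert h using 2 <;> push_cast <;> ring
      | succ d IHd =>
        intro k hk u w hu v
        have e1 := IHd (k + 1) (by omega) u w hu v
        have e2 := IH k (by omega) u w hu v
        have e1' : VA.Tres u ((n : ℤ) + w + k + 1) (-(2 * (n : ℤ) + 2) - m - 1) v
            ∈ VA.ZhuO n := by
          convert e1 using 2 <;> push_cast <;> ring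
        have e2' : VA.Tres u ((n : ℤ) + w + k) (-(2 * (n : ℤ) + 2) - m - 1 + 1) v
            ∈ VA.ZhuO n := by
          convert e2 using 2 <;> push_cast <;> ring
        have hT2 := VA.Tres_shift u ((n : ℤ) + w + k) (-(2 * (n : ℤ) + 2) - m - 1) v
        have heq : VA.Tres u ((n : ℤ) + w + k) (-(2 * (n : ℤ) + 2) - m - 1) v
            = VA.Tres u ((n : ℤ) + w + k + 1) (-(2 * (n : ℤ) + 2) - m - 1) v
              - VA.Tres u ((n : ℤ) + w + k) (-(2 * (n : ℤ) + 2) - m - 1 + 1) v := by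
          rw [hT2]
          abel
        rw [heq]
        exact Submodule.sub_mem _ e1' e2'
    intro k hk u w hu v
    have h := hdown (m + 1 - k) k (by omega) u w hu v
    convert h using 2 <;> push_cast <;> ring

lemma ZhuO_le (n : ℕ) : VA.ZhuO (n + 1) ≤ VA.ZhuO n := by
  rw [ZhuO, Submodule.span_le]
  rintro x (⟨u, v, ⟨w, hu⟩, rfl⟩ | ⟨v, rfl⟩)
  · have h := VA.keyT n 2 1 (by omega) u w hu v
    show _ ∈ VA.ZhuO n
    rw [circN, VA.resPow_homog hu]
    convert h using 2 <;> push_cast <;> ring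
  · exact Submodule.subset_span (Or.inr ⟨v, rfl⟩)

lemma star_diff_homog (n : ℕ) (u v : V) (w : ℤ) (hu : VA.proj w u = u) :
    VA.starN (n + 1) u v - VA.starN n u v ∈ VA.ZhuO n := by
  set A : ℕ → ℂ := fun m => (-1 : ℂ) ^ m * (((m + (n + 1)).choose (n + 1) : ℕ) : ℂ) with hA
  set B : ℕ → ℂ := fun m => (-1 : ℂ) ^ m * (((m + n).choose n : ℕ) : ℂ) with hB
  set G : ℕ → V := fun j => VA.Tres u (w + n) (-(n : ℤ) - 1 - j) v with hG
  have hGmem : ∀ j : ℕ, n + 1 ≤ j → G j ∈ VA.ZhuO n := by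
    intro j hj
    have h := VA.keyT n (j - n - 1) 0 (by omega) u w hu v
    rw [hG]
    convert h using 2 <;> push_cast <;> omega
  have hPas : ∀ m : ℕ, B (m + 1) = A (m + 1) + A m := by
    intro m
    rw [hA, hB]
    simp only
    rw [show m + 1 + (n + 1) = (m + n + 1) + 1 by ring, show m + 1 + n = m + n + 1 by ring,
      show m + (n + 1) = m + n + 1 by ring]
    rw [Nat.choose_succ_succ (m + n + 1) n]
    push_cast
    ring
  have hstar1 : VA.starN (n + 1) u v = ∑ m ∈ Finset.range (n + 2), A m • (G (m + 1) + G m) := by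
    unfold starN
    refine Finset.sum_congr (by norm_num) fun m hm => ?_
    rw [VA.resPow_homog hu]
    rw [show ((n + 1 : ℕ) : ℤ) + w = (w + (n : ℤ)) + 1 by push_cast; ring]
    rw [show (-(((n + 1 : ℕ)) : ℤ) - (m : ℤ) - 1) = (-(n : ℤ) - 1 - ((m + 1 : ℕ) : ℤ)) by
      push_cast; ring]
    rw [VA.Tres_shift]
    rw [show (-(n : ℤ) - 1 - ((m + 1 : ℕ) : ℤ) + 1) = -(n : ℤ) - 1 - (m : ℤ) by push_cast; ring]
  have hstar2 : VA.starN n u v = ∑ m ∈ Finset.range (n + 1), B m • G m := by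
    unfold starN
    refine Finset.sum_congr rfl fun m hm => ?_
    rw [VA.resPow_homog hu]
    rw [show ((n : ℕ) : ℤ) + w = w + (n : ℤ) by ring]
    rw [show (-((n : ℕ) : ℤ) - (m : ℤ) - 1) = -(n : ℤ) - 1 - (m : ℤ) by ring]
  have hD : VA.starN (n + 1) u v - VA.starN n u v
      = (A n + A (n + 1)) • G (n + 1) + A (n + 1) • G (n + 2) := by
    rw [hstar1, hstar2]
    rw [Finset.sum_range_succ (fun m => A m • (G (m + 1) + G m)) (n + 1)]
    rw [add_sub_right_comm, ← Finset.sum_sub_distrib]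
    have hterm : ∀ m ∈ Finset.range (n + 1),
        A m • (G (m + 1) + G m) - B m • G m
          = (A m - B m) • G m - (A (m + 1) - B (m + 1)) • G (m + 1) := by
      intro m _
      have h : A (m + 1) - B (m + 1) = -A m := by rw [hPas m]; ring
      rw [h]
      module
    rw [Finset.sum_congr rfl hterm,
      Finset.sum_range_sub' (fun m => (A m - B m) • G m) (n + 1)]
    have hA0 : A 0 - B 0 = 0 := by
      rw [hA, hB]
      simp
    have hfn : A (n + 1) - B (n + 1) = -A n := by rw [hPas n]; ring
    rw [hA0, hfn, zero_smul]
    module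
  rw [hD]
  exact Submodule.add_mem _ (Submodule.smul_mem _ _ (hGmem (n + 1) le_rfl))
    (Submodule.smul_mem _ _ (hGmem (n + 2) (by omega)))

lemma star_diff (n : ℕ) (u v : V) :
    VA.starN (n + 1) u v - VA.starN n u v ∈ VA.ZhuO n := by
  obtain ⟨s, hs⟩ := VA.exists_decomp u
  rw [hs, VA.starN_sum_left, VA.starN_sum_left, ← Finset.sum_sub_distrib]
  refine Submodule.sum_mem _ fun m _ => ?_
  exact VA.star_diff_homog n (VA.proj m u) v m (by rw [VA.proj_idem]; simp)

end GRVertexAlgebra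


/-- Let `V` be a vertex operator algebra and `n > 0`.  The map
`A_n(V) → A_{n-1}(V)`, `v + O_n(V) ↦ v + O_{n-1}(V)`, is a well-defined surjective
homomorphism of the (associative) Zhu algebras: it is a surjective linear map commuting
with the quotient maps and carrying the product `*_n` to the product `*_{n-1}`. -/
theorem Zhu_algebra_surjection {V : Type} [AddCommGroup V] [Module ℂ V]
    (VA : VertexOperatorAlgebra V) (n : ℕ) (hn : 0 < n) :
    ∃ f : (V ⧸ VA.ZhuO n) →ₗ[ℂ] (V ⧸ VA.ZhuO (n - 1)),
      Function.Surjective f ∧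
      (∀ v : V, f (Submodule.Quotient.mk v) = Submodule.Quotient.mk v) ∧
      (∀ u v : V, f (Submodule.Quotient.mk (VA.starN n u v))
        = Submodule.Quotient.mk (VA.starN (n - 1) u v)) := by
  obtain ⟨n', rfl⟩ : ∃ n', n = n' + 1 := ⟨n - 1, by omega⟩
  simp only [Nat.add_sub_cancel]
  have hle : VA.ZhuO (n' + 1) ≤ (VA.ZhuO n').comap (LinearMap.id : V →ₗ[ℂ] V) := by
    rw [Submodule.comap_id]
    exact VA.ZhuO_le n'
  refine ⟨Submodule.mapQ _ _ LinearMap.id hle, ?_, ?_, ?_⟩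
  · intro y
    obtain ⟨v, rfl⟩ := Submodule.Quotient.mk_surjective _ y
    exact ⟨Submodule.Quotient.mk v, by rw [Submodule.mapQ_apply]; rfl⟩
  · intro v
    rw [Submodule.mapQ_apply]
    rfl
  · intro u v
    rw [Submodule.mapQ_apply]
    show Submodule.Quotient.mk (VA.starN (n' + 1) u v) = _
    rw [Submodule.Quotient.eq]
    exact VA.star_diff n' u v
end
end
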